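/- Let r ≥ 1, q ≥ 2, and n ≥ 2r be integers. There exists an (n,r,2)_q buffer code (binary buffer, ℓ = 2) that guarantees t = (q−1)(n−r) writes. -/

import Mathlib

/-- `IsBufferCode D E` says that the pair of maps `(D, E)` forms an `(n,r,ℓ)_q` buffer
code: whenever the encoder succeeds on symbol `a`, cell levels do not decrease, the first
buffer symbol of the new state is `a`, and the remaining buffer symbols are the previous
buffer shifted by one position. -/
structure IsBufferCode {n r l q : ℕ}
    (D : (Fin n → Fin q) → (Fin r → Fin l))
    (E : Fin l → (Fin n → Fin q) → Option (Fin n → Fin q)) : Prop where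
  mono : ∀ a x y, E a x = some y → ∀ j, x j ≤ y j
  head : ∀ a x y, E a x = some y → ∀ h : 0 < r, D y ⟨0, h⟩ = a
  shift : ∀ a x y, E a x = some y → ∀ (i : Fin r) (h : (i : ℕ) + 1 < r),
            D y ⟨(i : ℕ) + 1, h⟩ = D x i

/-- `CanWriteBuf E x s` means the sequence of symbol writes `s` can be performed starting
from cell-state vector `x`, i.e. iteratively applying the encoder never produces `none`. -/
def CanWriteBuf {n l q : ℕ} (E : Fin l → (Fin n → Fin q) → Option (Fin n → Fin q)) :
    (Fin n → Fin q) → List (Fin l) → Prop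
  | _, [] => True
  | x, a :: s => ∃ y, E a x = some y ∧ CanWriteBuf E y s

/-- The buffer code guarantees `t` writes: every sequence of at most `t` symbol writes,
starting from the all-zero cell-state vector, is accommodated without a block erasure. -/
def GuaranteesBuf {n l q : ℕ} (E : Fin l → (Fin n → Fin q) → Option (Fin n → Fin q))
    (t : ℕ) : Prop :=
  ∀ x : Fin n → Fin q, (∀ j, (x j : ℕ) = 0) →
    ∀ s : List (Fin l), s.length ≤ t → CanWriteBuf E x s

/-!
Writes are dealt round-robin to `r` lanes (write `s` goes to lane `s % r`), so the `r` most
recent symbols lie in distinct lanes, and they are grouped into rounds of `m = n - r`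
consecutive writes. Every write claims fresh cells: the write opening its lane's round claims the
lane's private cells `2b` and `2b + 1`, any other write the shared cell `r + s % m`. A round thus
claims every cell once, so in `(q - 1) m` writes no cell is claimed more than `q - 1` times.

A cell's level is the number of times it was claimed minus the number of holes on it. Each lane
keeps one hole, and its symbol is `1` exactly when the hole is the last cell claimed by its
latest write: writing `1` moves the hole there, writing `0` leaves it in place, except that an
opening write moves it to `2b`. Levels never decrease, because a hole only moves onto a cell
that the current write claims. A lane's hole always lies on a cell claimed since the lane's last
opening write, which keeps the holes of other lanes off its recent cells. Hence, once the time is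
known, the symbol of each recent write is `1` iff its last claimed cell is one level short; and
the time is known, as the total level is a strictly increasing function of it.
-/

structure BufferMachine (n r l q t : ℕ) where
  State : Type
  Valid : State → Prop
  time : State → ℕ
  level : State → Fin n → ℕ
  window : State → Fin r → Fin l
  step : State → Fin l → State
  init : State
  valid_init : Valid init
  time_init : time init = 0
  level_init : ∀ j, level init j = 0
  time_step : ∀ s a, time (step s a) = time s + 1
  valid_step : ∀ s a, Valid s → time s < t → Valid (step s a)
  level_lt : ∀ s j, Valid s → level s j < q
  level_le_step : ∀ s a j, Valid s → time s < t → level s j ≤ level (step s a) j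
  window_step_zero : ∀ s a (h : 0 < r), Valid s → time s < t → window (step s a) ⟨0, h⟩ = a
  window_step_succ : ∀ s a (i : Fin r) (h : (i : ℕ) + 1 < r), Valid s → time s < t →
    window (step s a) ⟨i + 1, h⟩ = window s i
  time_eq_of_level_eq : ∀ s s', Valid s → Valid s' → level s = level s' → time s = time s'
  window_eq_of_level_eq : ∀ s s', Valid s → Valid s' → level s = level s' → window s = window s'

namespace BufferMachine

variable {n r l q t : ℕ} (M : BufferMachine n r l q t)

def Represents (s : M.State) (x : Fin n → Fin q) : Prop :=
  M.Valid s ∧ ∀ j, M.level s j = x j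

def cells (s : M.State) (hs : M.Valid s) : Fin n → Fin q :=
  fun j => ⟨M.level s j, M.level_lt s j hs⟩

theorem represents_cells {s : M.State} (hs : M.Valid s) : M.Represents s (M.cells s hs) :=
  ⟨hs, fun _ => rfl⟩

open Classical in
noncomputable def decoder (x : Fin n → Fin q) : Fin r → Fin l :=
  if h : ∃ s, M.Represents s x then M.window h.choose else M.window M.init

open Classical in
noncomputable def encoder (a : Fin l) (x : Fin n → Fin q) : Option (Fin n → Fin q) :=
  if h : ∃ s, M.Represents s x ∧ M.time s < t then
    some (M.cells (M.step h.choose a) (M.valid_step _ a h.choose_spec.1.1 h.choose_spec.2))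
  else none

theorem level_eq_of_represents {s s' : M.State} {x : Fin n → Fin q} (hs : M.Represents s x)
    (hs' : M.Represents s' x) : M.level s = M.level s' :=
  funext fun j => (hs.2 j).trans (hs'.2 j).symm

theorem decoder_eq {s : M.State} {x : Fin n → Fin q} (hs : M.Represents s x) :
    M.decoder x = M.window s := by
  have h : ∃ s, M.Represents s x := ⟨s, hs⟩
  rw [decoder, dif_pos h]
  exact M.window_eq_of_level_eq _ _ h.choose_spec.1 hs.1 (M.level_eq_of_represents h.choose_spec hs)

theorem encoder_eq_some {a : Fin l} {x y : Fin n → Fin q} (h : M.encoder a x = some y) :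
    ∃ s, M.Represents s x ∧ M.time s < t ∧ M.Represents (M.step s a) y := by
  rw [encoder] at h
  split_ifs at h with hx
  obtain ⟨hs, hlt⟩ := hx.choose_spec
  exact ⟨_, hs, hlt, Option.some_inj.1 h ▸ M.represents_cells _⟩

theorem isBufferCode : IsBufferCode M.decoder M.encoder where
  mono a x y h j := by
    obtain ⟨s, hs, hlt, hy⟩ := M.encoder_eq_some h
    rw [Fin.le_def, ← hs.2, ← hy.2]
    exact M.level_le_step s a j hs.1 hlt
  head a x y h hr := by
    obtain ⟨s, hs, hlt, hy⟩ := M.encoder_eq_some h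
    rw [M.decoder_eq hy, M.window_step_zero s a hr hs.1 hlt]
  shift a x y h i hi := by
    obtain ⟨s, hs, hlt, hy⟩ := M.encoder_eq_some h
    rw [M.decoder_eq hy, M.decoder_eq hs, M.window_step_succ s a i hi hs.1 hlt]

theorem canWriteBuf_encoder :
    ∀ (w : List (Fin l)) (s : M.State) (x : Fin n → Fin q), M.Represents s x →
      M.time s + w.length ≤ t → CanWriteBuf M.encoder x w
  | [], _, _, _, _ => trivial
  | a :: w, s, x, hs, hlen => by
    have hlt : M.time s < t := by simp only [List.length_cons] at hlen; omega
    have hx : ∃ s, M.Represents s x ∧ M.time s < t := ⟨s, hs, hlt⟩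
    obtain ⟨hs', -⟩ := hx.choose_spec
    have htime : M.time hx.choose = M.time s :=
      M.time_eq_of_level_eq _ _ hs'.1 hs.1 (M.level_eq_of_represents hs' hs)
    refine ⟨_, by rw [encoder, dif_pos hx], canWriteBuf_encoder w _ _ (M.represents_cells _) ?_⟩
    simp only [List.length_cons] at hlen
    rw [M.time_step, htime]
    omega

theorem guaranteesBuf : GuaranteesBuf M.encoder t := by
  intro x hx w hw
  refine M.canWriteBuf_encoder w M.init x ⟨M.valid_init, fun j => ?_⟩ (by rw [M.time_init]; omega)
  rw [M.level_init, hx]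

end BufferMachine

theorem Nat.mod_ne_mod_of_lt_of_lt_add {r s s' : ℕ} (h : s < s') (h' : s' < s + r) :
    s' % r ≠ s % r := by
  intro heq
  have hdvd : r ∣ s' - s := Nat.dvd_of_mod_eq_zero (Nat.sub_mod_eq_zero_of_mod_eq heq)
  have := Nat.le_of_dvd (by omega) hdvd
  omega

theorem Nat.exists_mod_eq_of_le_of_lt_add {r : ℕ} (R : ℕ) {b : ℕ} (hb : b < r) :
    ∃ s, R ≤ s ∧ s < R + r ∧ s % r = b := by
  have hlt := Nat.mod_lt (b + r - R % r) (show 0 < r by omega)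
  refine ⟨R + (b + r - R % r) % r, by omega, by omega, ?_⟩
  have hR := Nat.div_add_mod R r
  have hRr := Nat.mod_lt R (show 0 < r by omega)
  rw [Nat.add_mod_mod, show R + (b + r - R % r) = b + r * (R / r + 1) by rw [Nat.mul_succ]; omega,
    Nat.add_mul_mod_self_left, Nat.mod_eq_of_lt hb]

open Finset

namespace MulticellBuffer

variable (n r : ℕ)

-- Write `s` is the first one of lane `s % r` in its round, since rounds have `n - r ≥ r` writes.
abbrev IsOpening (s : ℕ) : Prop := s % (n - r) < r

def claims (s : ℕ) : Finset ℕ :=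
  if IsOpening n r s then {2 * (s % r), 2 * (s % r) + 1} else {r + s % (n - r)}

def newCell (s : ℕ) : ℕ :=
  if IsOpening n r s then 2 * (s % r) + 1 else r + s % (n - r)

variable {n r}

theorem mem_claims {s c : ℕ} :
    c ∈ claims n r s ↔ IsOpening n r s ∧ c / 2 = s % r ∨ ¬ IsOpening n r s ∧ c = r + s % (n - r) := by
  unfold claims IsOpening
  split_ifs with h <;> simp only [Finset.mem_insert, Finset.mem_singleton] <;> omega

theorem newCell_mem_claims (s : ℕ) : newCell n r s ∈ claims n r s := by
  rw [mem_claims, newCell]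
  split_ifs with h <;> omega

theorem lt_of_mem_claims (hr : 0 < r) (hn : 2 * r ≤ n) {s c : ℕ} (h : c ∈ claims n r s) : c < n := by
  have := Nat.mod_lt s hr
  have := Nat.mod_lt s (show 0 < n - r by omega)
  rw [mem_claims] at h
  unfold IsOpening at h
  omega

theorem card_claims_of_lt (hn : 2 * r ≤ n) {s : ℕ} (hs : s < r) : (claims n r s).card = 2 := by
  have hopen : IsOpening n r s := by rw [IsOpening, Nat.mod_eq_of_lt (by omega)]; exact hs
  rw [claims, if_pos hopen, Finset.card_pair (by omega)]

theorem one_le_card_claims (s : ℕ) : 1 ≤ (claims n r s).card :=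
  Finset.card_pos.2 ⟨_, newCell_mem_claims s⟩

theorem exists_isOpening_of_mem_claims (hr : 0 < r) (hn : 2 * r ≤ n) {s₁ s₂ c : ℕ}
    (h₁ : c ∈ claims n r s₁) (h₂ : c ∈ claims n r s₂) (hlt : s₁ < s₂) :
    ∃ s, s₁ < s ∧ s ≤ s₂ ∧ s % r = s₁ % r ∧ IsOpening n r s := by
  rw [mem_claims] at h₁ h₂
  unfold IsOpening at h₁ h₂ ⊢
  rcases h₁ with ⟨ho₁, hc₁⟩ | ⟨ho₁, hc₁⟩ <;> rcases h₂ with ⟨ho₂, hc₂⟩ | ⟨ho₂, hc₂⟩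
  · exact ⟨s₂, hlt, le_rfl, by omega, ho₂⟩
  · have := Nat.mod_lt s₁ hr; omega
  · have := Nat.mod_lt s₂ hr; omega
  · -- Both writes claim the same shared cell, so they are rounds apart, and lane `s₁ % r`
    -- opens the round of `s₂` before `s₂`.
    obtain ⟨s, hRs, hsR, hsr⟩ :=
      Nat.exists_mod_eq_of_le_of_lt_add ((n - r) * (s₂ / (n - r))) (Nat.mod_lt s₁ hr)
    have hm : 0 < n - r := by omega
    have hd₁ := Nat.div_add_mod s₁ (n - r)
    have hd₂ := Nat.div_add_mod s₂ (n - r)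
    have hq : s₁ / (n - r) < s₂ / (n - r) := by
      by_contra hge
      have := Nat.mul_le_mul_left (n - r) (not_lt.1 hge)
      omega
    have hround := Nat.mul_le_mul_left (n - r) (Nat.succ_le_of_lt hq)
    rw [Nat.mul_succ] at hround
    have hopen : s % (n - r) = s - (n - r) * (s₂ / (n - r)) := by
      obtain ⟨k, rfl⟩ : ∃ k, s = (n - r) * (s₂ / (n - r)) + k := ⟨_, (Nat.add_sub_of_le hRs).symm⟩
      rw [Nat.mul_add_mod, Nat.mod_eq_of_lt (by omega)]
      omega
    have := Nat.mod_lt s₁ hm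
    exact ⟨s, by omega, by omega, hsr, by rw [hopen]; omega⟩

theorem eq_of_mem_claims_of_div_eq (hr : 0 < r) {s₁ s₂ c : ℕ} (h₁ : c ∈ claims n r s₁)
    (h₂ : c ∈ claims n r s₂) (hdiv : s₁ / (n - r) = s₂ / (n - r)) : s₁ = s₂ := by
  have hd₁ := Nat.div_add_mod s₁ (n - r)
  have hd₂ := Nat.div_add_mod s₂ (n - r)
  rw [hdiv] at hd₁
  rw [mem_claims] at h₁ h₂
  unfold IsOpening at h₁ h₂
  rcases h₁ with ⟨ho₁, hc₁⟩ | ⟨ho₁, hc₁⟩ <;> rcases h₂ with ⟨ho₂, hc₂⟩ | ⟨ho₂, hc₂⟩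
  · rcases lt_trichotomy s₁ s₂ with hlt | heq | hgt
    · exact absurd (by omega) (Nat.mod_ne_mod_of_lt_of_lt_add (r := r) hlt (by omega))
    · exact heq
    · exact absurd (by omega) (Nat.mod_ne_mod_of_lt_of_lt_add (r := r) hgt (by omega))
  · have := Nat.mod_lt s₁ hr; omega
  · have := Nat.mod_lt s₂ hr; omega
  · omega

variable (n r)

-- `hole b` only means something for the lanes `b < min r time` that have written.
structure State where
  time : ℕ
  hole : ℕ → ℕ

def nextHole (σ : State) (a : Fin 2) : ℕ :=
  if a = 1 then newCell n r σ.time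
  else if IsOpening n r σ.time then 2 * (σ.time % r) else σ.hole (σ.time % r)

def step (σ : State) (a : Fin 2) : State :=
  ⟨σ.time + 1, Function.update σ.hole (σ.time % r) (nextHole n r σ a)⟩

def claimCount (τ c : ℕ) : ℕ := #{s ∈ range τ | c ∈ claims n r s}

def holeCount (σ : State) (c : ℕ) : ℕ := #{b ∈ range (min r σ.time) | σ.hole b = c}

def level (σ : State) (c : ℕ) : ℕ := claimCount n r σ.time c - holeCount r σ c

def window (σ : State) (j : Fin r) : Fin 2 :=
  if (j : ℕ) < σ.time ∧ σ.hole ((σ.time - 1 - j) % r) = newCell n r (σ.time - 1 - j) then 1 else 0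

def IsCurrentHole (σ : State) (b : ℕ) : Prop :=
  ∃ s < σ.time, s % r = b ∧ σ.hole b ∈ claims n r s ∧
    ∀ s', s < s' → s' < σ.time → s' % r = b → ¬ IsOpening n r s'

def Valid (q : ℕ) (σ : State) : Prop :=
  σ.time ≤ (q - 1) * (n - r) ∧ ∀ b < min r σ.time, IsCurrentHole n r σ b

variable {n r}

theorem claimCount_succ (τ c : ℕ) :
    claimCount n r (τ + 1) c = claimCount n r τ c + if c ∈ claims n r τ then 1 else 0 := by
  rw [claimCount, claimCount, Finset.range_add_one, Finset.filter_insert]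
  split_ifs with h
  · rw [Finset.card_insert_of_notMem (by simp)]
  · rfl

theorem claimCount_le (hr : 0 < r) {q τ : ℕ} (hτ : τ ≤ (q - 1) * (n - r)) (c : ℕ) :
    claimCount n r τ c ≤ q - 1 := by
  calc claimCount n r τ c ≤ (range (q - 1)).card := by
        refine Finset.card_le_card_of_injOn (· / (n - r)) (fun s hs => ?_) (fun s₁ hs₁ s₂ hs₂ h => ?_)
        · simp only [Finset.coe_filter, Finset.mem_range, Set.mem_ofPred_eq, Finset.coe_range,
            Set.mem_Iio] at hs ⊢
          exact Nat.div_lt_of_lt_mul (by rw [mul_comm]; omega)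
        · simp only [Finset.coe_filter, Finset.mem_range, Set.mem_ofPred_eq] at hs₁ hs₂
          exact eq_of_mem_claims_of_div_eq hr hs₁.2 hs₂.2 h
    _ = q - 1 := Finset.card_range _

theorem sum_claimCount (hr : 0 < r) (hn : 2 * r ≤ n) (τ : ℕ) :
    ∑ c ∈ range n, claimCount n r τ c = ∑ s ∈ range τ, (claims n r s).card := by
  have := Finset.sum_card_bipartiteAbove_eq_sum_card_bipartiteBelow (fun c s => c ∈ claims n r s)
    (s := range n) (t := range τ)
  refine this.trans (Finset.sum_congr rfl fun s _ => congrArg Finset.card ?_)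
  ext c
  simp only [Finset.bipartiteBelow, Finset.mem_filter, Finset.mem_range, and_iff_right_iff_imp]
  exact lt_of_mem_claims hr hn

theorem IsCurrentHole.mod_eq_of_mem_claims (hr : 0 < r) (hn : 2 * r ≤ n) {σ : State} {b s : ℕ}
    (hb : IsCurrentHole n r σ b) (hmem : σ.hole b ∈ claims n r s) (hs : s < σ.time)
    (hlast : ∀ s', s < s' → s' < σ.time → s' % r ≠ s % r) : s % r = b := by
  obtain ⟨s₁, hs₁, rfl, hmem₁, hfresh⟩ := hb
  rcases lt_trichotomy s₁ s with hlt | rfl | hgt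
  · obtain ⟨s', h₁, h₂, h₃, h₄⟩ := exists_isOpening_of_mem_claims hr hn hmem₁ hmem hlt
    exact absurd h₄ (hfresh s' h₁ (by omega) h₃)
  · rfl
  · obtain ⟨s', h₁, h₂, h₃, -⟩ := exists_isOpening_of_mem_claims hr hn hmem hmem₁ hgt
    exact absurd h₃ (hlast s' h₁ (by omega))

theorem IsCurrentHole.hole_ne_newCell (hr : 0 < r) (hn : 2 * r ≤ n) {σ : State}
    (hb : IsCurrentHole n r σ (σ.time % r)) (hopen : ¬ IsOpening n r σ.time) :
    σ.hole (σ.time % r) ≠ newCell n r σ.time := by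
  intro heq
  obtain ⟨s₁, hs₁, hs₁r, hmem₁, hfresh⟩ := hb
  obtain ⟨s', h₁, h₂, h₃, h₄⟩ :=
    exists_isOpening_of_mem_claims hr hn hmem₁ (heq ▸ newCell_mem_claims σ.time) hs₁
  rcases h₂.lt_or_eq with h₂ | rfl
  · exact hfresh s' h₁ h₂ (h₃.trans hs₁r) h₄
  · exact hopen h₄

theorem holeCount_le_claimCount {q : ℕ} {σ : State} (hσ : Valid n r q σ) (c : ℕ) :
    holeCount r σ c ≤ claimCount n r σ.time c := by
  refine Finset.card_le_card_of_surjOn (· % r) fun b hb => ?_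
  simp only [Finset.coe_filter, Finset.mem_range, Set.mem_ofPred_eq] at hb
  obtain ⟨s, hs, hsr, hmem, -⟩ := hσ.2 b hb.1
  rw [hb.2] at hmem
  exact ⟨s, by simpa using ⟨hs, hmem⟩, hsr⟩

theorem sum_holeCount (hr : 0 < r) (hn : 2 * r ≤ n) {q : ℕ} {σ : State} (hσ : Valid n r q σ) :
    ∑ c ∈ range n, holeCount r σ c = min r σ.time := by
  rw [← Finset.card_range (min r σ.time), Finset.card_eq_sum_card_fiberwise (t := range n)]
  · rfl
  intro b hb
  obtain ⟨s, -, -, hmem, -⟩ := hσ.2 b (Finset.mem_range.1 hb)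
  exact Finset.mem_range.2 (lt_of_mem_claims hr hn hmem)

theorem mod_lt_min_of_not_isOpening (hr : 0 < r) {τ : ℕ} (hopen : ¬ IsOpening n r τ) :
    τ % r < min r τ := by
  have := Nat.mod_le τ (n - r)
  have := Nat.mod_lt τ hr
  unfold IsOpening at hopen
  omega

theorem lt_min_of_ne_mod {b τ : ℕ} (hb : b < min r (τ + 1)) (hne : b ≠ τ % r) : b < min r τ := by
  by_contra h
  exact hne (by rw [Nat.mod_eq_of_lt (show τ < r by omega)]; omega)

theorem nextHole_mem_claims_or (σ : State) (a : Fin 2) :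
    nextHole n r σ a ∈ claims n r σ.time ∨
      ¬ IsOpening n r σ.time ∧ nextHole n r σ a = σ.hole (σ.time % r) := by
  unfold nextHole
  split_ifs with ha hopen
  · exact Or.inl (newCell_mem_claims _)
  · exact Or.inl (by rw [mem_claims]; omega)
  · exact Or.inr ⟨hopen, rfl⟩

theorem step_hole_of_ne (σ : State) (a : Fin 2) {b : ℕ} (hb : b ≠ σ.time % r) :
    (step n r σ a).hole b = σ.hole b :=
  Function.update_of_ne hb _ _

theorem valid_step (hr : 0 < r) {q : ℕ} {σ : State} (hσ : Valid n r q σ)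
    (ht : σ.time < (q - 1) * (n - r)) (a : Fin 2) : Valid n r q (step n r σ a) := by
  refine ⟨ht, fun b hb => ?_⟩
  by_cases hlane : b = σ.time % r
  · subst hlane
    have hhole : (step n r σ a).hole (σ.time % r) = nextHole n r σ a := Function.update_self _ _ _
    rcases nextHole_mem_claims_or σ a with hmem | ⟨hopen, heq⟩
    · exact ⟨σ.time, Nat.lt_succ_self _, rfl, hhole ▸ hmem, fun s' h₁ h₂ _ => by
        simp only [step] at h₂; omega⟩
    · obtain ⟨s₁, hs₁, hs₁r, hmem₁, hfresh⟩ := hσ.2 _ (mod_lt_min_of_not_isOpening hr hopen)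
      refine ⟨s₁, Nat.lt_succ_of_lt hs₁, hs₁r, by rwa [hhole, heq], fun s' h₁ h₂ h₃ => ?_⟩
      rcases (Nat.lt_succ_iff.1 h₂).lt_or_eq with h₂ | rfl
      · exact hfresh s' h₁ h₂ h₃
      · exact hopen
  · obtain ⟨s₁, hs₁, hs₁r, hmem₁, hfresh⟩ := hσ.2 b (lt_min_of_ne_mod hb hlane)
    refine ⟨s₁, Nat.lt_succ_of_lt hs₁, hs₁r, by rwa [step_hole_of_ne σ a hlane], fun s' h₁ h₂ h₃ => ?_⟩
    rcases (Nat.lt_succ_iff.1 h₂).lt_or_eq with h₂ | rfl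
    · exact hfresh s' h₁ h₂ h₃
    · exact absurd h₃.symm hlane

theorem holeCount_step_le (hr : 0 < r) (σ : State) (a : Fin 2) (c : ℕ) :
    holeCount r (step n r σ a) c ≤ holeCount r σ c + if c ∈ claims n r σ.time then 1 else 0 := by
  have hother : ∀ b ∈ {b ∈ range (min r (σ.time + 1)) | (step n r σ a).hole b = c},
      b ≠ σ.time % r → b ∈ {b ∈ range (min r σ.time) | σ.hole b = c} := by
    intro b hb hne
    simp only [Finset.mem_filter, Finset.mem_range] at hb ⊢
    exact ⟨lt_min_of_ne_mod hb.1 hne, step_hole_of_ne σ a hne ▸ hb.2⟩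
  unfold holeCount
  split_ifs with hc
  · refine (Finset.card_le_card fun b hb => ?_).trans (Finset.card_insert_le (σ.time % r) _)
    by_cases hne : b = σ.time % r
    · exact hne ▸ Finset.mem_insert_self _ _
    · exact Finset.mem_insert_of_mem (hother b hb hne)
  · refine (Finset.card_le_card fun b hb => ?_).trans (Nat.le_add_right _ 0)
    by_cases hne : b = σ.time % r
    · subst hne
      have hhole : nextHole n r σ a = c := by
        simp only [Finset.mem_filter] at hb
        exact (Function.update_self _ _ _).symm.trans hb.2
      rcases nextHole_mem_claims_or σ a with hmem | ⟨hopen, heq⟩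
      · exact absurd (hhole ▸ hmem) hc
      · simpa [← heq, hhole] using mod_lt_min_of_not_isOpening hr hopen
    · exact hother b hb hne

theorem level_le_level_step (hr : 0 < r) (σ : State) (a : Fin 2) (c : ℕ) :
    level n r σ c ≤ level n r (step n r σ a) c := by
  calc level n r σ c
      = (claimCount n r σ.time c + if c ∈ claims n r σ.time then 1 else 0) -
          (holeCount r σ c + if c ∈ claims n r σ.time then 1 else 0) :=
        (Nat.add_sub_add_right _ _ _).symm
    _ ≤ level n r (step n r σ a) c := by
        rw [level, step, claimCount_succ]
        exact Nat.sub_le_sub_left (holeCount_step_le hr σ a c) _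

theorem nextHole_eq_newCell_iff (hr : 0 < r) (hn : 2 * r ≤ n) {q : ℕ} {σ : State}
    (hσ : Valid n r q σ) (a : Fin 2) : nextHole n r σ a = newCell n r σ.time ↔ a = 1 := by
  refine ⟨fun h => ?_, fun ha => by rw [nextHole, if_pos ha]⟩
  by_contra ha
  rw [nextHole, if_neg ha] at h
  split_ifs at h with hopen
  · rw [newCell, if_pos hopen] at h
    omega
  · exact (hσ.2 _ (mod_lt_min_of_not_isOpening hr hopen)).hole_ne_newCell hr hn hopen h

theorem window_step_zero (hr : 0 < r) (hn : 2 * r ≤ n) {q : ℕ} {σ : State}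
    (hσ : Valid n r q σ) (a : Fin 2) : window n r (step n r σ a) ⟨0, hr⟩ = a := by
  simp only [window, step, Nat.add_sub_cancel, Nat.sub_zero, Nat.zero_lt_succ, true_and,
    Function.update_self, nextHole_eq_newCell_iff hr hn hσ]
  fin_cases a <;> rfl

theorem window_step_succ (σ : State) (a : Fin 2) (i : Fin r) (hi : (i : ℕ) + 1 < r) :
    window n r (step n r σ a) ⟨i + 1, hi⟩ = window n r σ i := by
  simp only [window, step, Nat.add_sub_cancel, Nat.add_lt_add_iff_right]
  refine if_congr (and_congr_right fun hiτ => ?_) rfl rfl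
  rw [show σ.time - (i + 1) = σ.time - 1 - i by omega, Function.update_of_ne]
  exact Nat.mod_ne_mod_of_lt_of_lt_add (by omega) (by omega) |>.symm

theorem window_eq_ite_level_lt_claimCount (hr : 0 < r) (hn : 2 * r ≤ n) {q : ℕ} {σ : State}
    (hσ : Valid n r q σ) (j : Fin r) :
    window n r σ j = if (j : ℕ) < σ.time ∧
        level n r σ (newCell n r (σ.time - 1 - j)) < claimCount n r σ.time (newCell n r (σ.time - 1 - j))
      then 1 else 0 := by
  set s₀ := σ.time - 1 - j
  refine if_congr (and_congr_right fun hj => ?_) rfl rfl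
  have hclaims : 0 < claimCount n r σ.time (newCell n r s₀) :=
    Finset.card_pos.2 ⟨s₀, by simpa using ⟨by omega, newCell_mem_claims s₀⟩⟩
  have hcount : 0 < holeCount r σ (newCell n r s₀) ↔ σ.hole (s₀ % r) = newCell n r s₀ := by
    rw [holeCount, Finset.card_pos]
    constructor
    · rintro ⟨b, hb⟩
      simp only [Finset.mem_filter, Finset.mem_range] at hb
      have hlast : ∀ s', s₀ < s' → s' < σ.time → s' % r ≠ s₀ % r :=
        fun s' h₁ h₂ => Nat.mod_ne_mod_of_lt_of_lt_add h₁ (by omega)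
      rw [(hσ.2 b hb.1).mod_eq_of_mem_claims hr hn (hb.2 ▸ newCell_mem_claims s₀) (by omega) hlast]
      exact hb.2
    · intro h
      have := Nat.mod_lt s₀ hr
      have := Nat.mod_le s₀ r
      exact ⟨_, by simpa using ⟨⟨by omega, by omega⟩, h⟩⟩
  rw [← hcount, level]
  have := holeCount_le_claimCount hσ (newCell n r s₀)
  omega

-- Each write adds the number of cells it claims to the total level, less one for the first write
-- of each lane, which creates the lane's hole.
variable (n r) in
def load (τ : ℕ) : ℕ := ∑ s ∈ range τ, ((claims n r s).card - if s < r then 1 else 0)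

theorem load_strictMono (hn : 2 * r ≤ n) : StrictMono (load n r) := by
  refine strictMono_nat_of_lt_succ fun τ => ?_
  rw [load, load, Finset.sum_range_succ, Nat.lt_add_right_iff_pos]
  split_ifs with hτ
  · rw [card_claims_of_lt hn hτ]
    omega
  · exact one_le_card_claims τ

theorem sum_level (hr : 0 < r) (hn : 2 * r ≤ n) {q : ℕ} {σ : State} (hσ : Valid n r q σ) :
    ∑ c ∈ range n, level n r σ c = load n r σ.time := by
  have hfirst : {s ∈ range σ.time | s < r} = range (min r σ.time) := by
    ext s
    simp only [Finset.mem_filter, Finset.mem_range]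
    omega
  have hle : ∀ s ∈ range σ.time, (if s < r then 1 else 0) ≤ (claims n r s).card := fun s _ => by
    split_ifs
    · exact one_le_card_claims s
    · exact Nat.zero_le _
  rw [load, Finset.sum_tsub_distrib _ hle, Finset.sum_boole, Nat.cast_id, hfirst, Finset.card_range,
    ← sum_holeCount hr hn hσ, ← sum_claimCount hr hn, ← Finset.sum_tsub_distrib _ fun c _ =>
      holeCount_le_claimCount hσ c]
  rfl

theorem time_eq_of_level_eq (hr : 0 < r) (hn : 2 * r ≤ n) {q : ℕ} {σ σ' : State}
    (hσ : Valid n r q σ) (hσ' : Valid n r q σ') (h : ∀ c < n, level n r σ c = level n r σ' c) :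
    σ.time = σ'.time := by
  refine (load_strictMono hn).injective ?_
  rw [← sum_level hr hn hσ, ← sum_level hr hn hσ']
  exact Finset.sum_congr rfl fun c hc => h c (Finset.mem_range.1 hc)

theorem window_eq_of_level_eq (hr : 0 < r) (hn : 2 * r ≤ n) {q : ℕ} {σ σ' : State}
    (hσ : Valid n r q σ) (hσ' : Valid n r q σ') (h : ∀ c < n, level n r σ c = level n r σ' c) :
    window n r σ = window n r σ' := by
  funext j
  rw [window_eq_ite_level_lt_claimCount hr hn hσ, window_eq_ite_level_lt_claimCount hr hn hσ',
    time_eq_of_level_eq hr hn hσ hσ' h, h _ (lt_of_mem_claims hr hn (newCell_mem_claims _))]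

def bufferMachine (hr : 0 < r) (hn : 2 * r ≤ n) {q : ℕ} (hq : 0 < q) :
    BufferMachine n r 2 q ((q - 1) * (n - r)) where
  State := State
  Valid := Valid n r q
  time := State.time
  level σ c := level n r σ c
  window := window n r
  step := step n r
  init := ⟨0, fun _ => 0⟩
  valid_init := ⟨Nat.zero_le _, fun b hb => absurd hb (by simp)⟩
  time_init := rfl
  level_init _ := by simp [level, claimCount]
  time_step _ _ := rfl
  valid_step σ a hσ ht := valid_step hr hσ ht a
  level_lt σ c hσ := (Nat.sub_le _ _).trans_lt ((claimCount_le hr hσ.1 c).trans_lt (by omega))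
  level_le_step σ a c _ _ := level_le_level_step hr σ a c
  window_step_zero σ a _ hσ _ := window_step_zero hr hn hσ a
  window_step_succ σ a i hi _ _ := window_step_succ σ a i hi
  time_eq_of_level_eq σ σ' hσ hσ' h :=
    time_eq_of_level_eq hr hn hσ hσ' fun c hc => congrFun h ⟨c, hc⟩
  window_eq_of_level_eq σ σ' hσ hσ' h :=
    window_eq_of_level_eq hr hn hσ hσ' fun c hc => congrFun h ⟨c, hc⟩

end MulticellBuffer

/-- For `r ≥ 1`, `q ≥ 2`, `n ≥ 2r`, there exists an `(n,r,2)_q` buffer code (binary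
buffer) guaranteeing `t = (q-1)(n-r)` writes. -/
theorem exists_multicell_buffer_code
    (n r q : ℕ) (hr : 1 ≤ r) (hq : 2 ≤ q) (hn : 2 * r ≤ n) :
    ∃ (D : (Fin n → Fin q) → (Fin r → Fin 2))
      (E : Fin 2 → (Fin n → Fin q) → Option (Fin n → Fin q)),
      IsBufferCode D E ∧ GuaranteesBuf E ((q - 1) * (n - r)) :=
  let M := MulticellBuffer.bufferMachine hr hn (q := q) (by omega)
  ⟨M.decoder, M.encoder, M.isBufferCode, M.guaranteesBuf⟩
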